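/- arXiv:2410.13940 — 3 statements merged into one kernel-verified Lean document; each statement's English description precedes it below -/
import Mathlib

section
/- Let A₁, A₂ be 2×2 complex matrices with A₁A₂* + A₂A₁* = 0 and rk(A₁, A₂) = 2 (the 2×4 juxtaposed matrix has full rank). Then U := (A₁ + A₂)⁻¹(A₁ − A₂) is unitary. -/
/-!
Write `S = A₁ + A₂` and `D = A₁ - A₂`. The anticommutation hypothesis kills the cross terms, so
`S Sᴴ = D Dᴴ = A₁ A₁ᴴ + A₂ A₂ᴴ = M Mᴴ` with `M = (A₁, A₂)`. Since `M` has full row rank, `M Mᴴ` is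
invertible, hence so is `S`, and `(S⁻¹ D)(S⁻¹ D)ᴴ = S⁻¹ (S Sᴴ) (Sᴴ)⁻¹ = 1`.
-/

open Matrix
open scoped ComplexOrder

section StarRing

variable {R : Type*} [Ring R] [StarRing R] {a b : R}

theorem add_mul_star_add_of_mul_star_add_mul_star_eq_zero (h : a * star b + b * star a = 0) :
    (a + b) * star (a + b) = a * star a + b * star b := by
  calc (a + b) * star (a + b) = a * star a + b * star b + (a * star b + b * star a) := by
        rw [star_add]; noncomm_ring
    _ = a * star a + b * star b := by rw [h, add_zero]

theorem sub_mul_star_sub_of_mul_star_add_mul_star_eq_zero (h : a * star b + b * star a = 0) :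
    (a - b) * star (a - b) = a * star a + b * star b := by
  calc (a - b) * star (a - b) = a * star a + b * star b - (a * star b + b * star a) := by
        rw [star_sub]; noncomm_ring
    _ = a * star a + b * star b := by rw [h, sub_zero]

end StarRing

namespace Matrix

variable {m n K : Type*} [Fintype n]

theorem isUnit_of_rank_eq_card [DecidableEq n] [Field K] {A : Matrix n n K} (h : A.rank = Fintype.card n) :
    IsUnit A := by
  rw [← mulVec_surjective_iff_isUnit]
  have hrange : LinearMap.range A.mulVecLin = ⊤ :=
    Submodule.eq_top_of_finrank_eq (by simpa [rank] using h)
  exact LinearMap.range_eq_top.mp hrange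

theorem isUnit_mul_conjTranspose_of_rank_eq_card [Fintype m] [DecidableEq m] [Field K]
    [PartialOrder K] [StarRing K] [StarOrderedRing K] {M : Matrix m n K}
    (h : M.rank = Fintype.card m) : IsUnit (M * Mᴴ) :=
  isUnit_of_rank_eq_card (by rw [rank_self_mul_conjTranspose, h])

theorem isUnit_of_isUnit_mul_conjTranspose [DecidableEq n] [CommRing K] [StarRing K] {A : Matrix n n K}
    (h : IsUnit (A * Aᴴ)) : IsUnit A := by
  rw [isUnit_iff_isUnit_det, det_mul] at *
  exact isUnit_of_mul_isUnit_left h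

theorem fromCols_mul_conjTranspose_fromCols [Semiring K] [StarRing K]
    {m₁ m₂ : Type*} [Fintype m₁] [Fintype m₂]
    (A : Matrix m m₁ K) (B : Matrix m m₂ K) :
    fromCols A B * (fromCols A B)ᴴ = A * Aᴴ + B * Bᴴ := by
  rw [conjTranspose_fromCols_eq_fromRows_conjTranspose, fromCols_mul_fromRows]

theorem inv_mul_mul_conjTranspose_inv_mul [DecidableEq n] [CommRing K] [StarRing K] {S D : Matrix n n K}
    (hS : IsUnit S) (h : D * Dᴴ = S * Sᴴ) : (S⁻¹ * D) * (S⁻¹ * D)ᴴ = 1 := by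
  have hS' : IsUnit S.det := (isUnit_iff_isUnit_det S).mp hS
  have hSH : IsUnit Sᴴ.det := by rw [det_conjTranspose]; exact hS'.star
  calc (S⁻¹ * D) * (S⁻¹ * D)ᴴ = S⁻¹ * (D * Dᴴ) * Sᴴ⁻¹ := by
        rw [conjTranspose_mul, conjTranspose_nonsing_inv]; simp only [mul_assoc]
    _ = (S⁻¹ * S) * (Sᴴ * Sᴴ⁻¹) := by rw [h]; simp only [mul_assoc]
    _ = 1 := by rw [nonsing_inv_mul _ hS', mul_nonsing_inv _ hSH, mul_one]

end Matrix

theorem stmt6 (A₁ A₂ : Matrix (Fin 2) (Fin 2) ℂ)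
    (h : A₁ * A₂ᴴ + A₂ * A₁ᴴ = 0)
    (hrk : (Matrix.fromCols A₁ A₂).rank = 2) :
    ((A₁ + A₂)⁻¹ * (A₁ - A₂)) * ((A₁ + A₂)⁻¹ * (A₁ - A₂))ᴴ = 1 := by
  have hsum := add_mul_star_add_of_mul_star_add_mul_star_eq_zero h
  have hdiff := sub_mul_star_sub_of_mul_star_add_mul_star_eq_zero h
  simp only [star_eq_conjTranspose] at hsum hdiff
  have hGram : IsUnit ((A₁ + A₂) * (A₁ + A₂)ᴴ) := by
    rw [hsum, ← fromCols_mul_conjTranspose_fromCols]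
    exact isUnit_mul_conjTranspose_of_rank_eq_card (by rw [hrk, Fintype.card_fin])
  exact inv_mul_mul_conjTranspose_inv_mul (isUnit_of_isUnit_mul_conjTranspose hGram)
    (hdiff.trans hsum.symm)
end

section
/- Let a₁, a₂ ∈ ℂ² with a₂ = α a₁ for some α ∈ ℂ and a₁ ≠ 0, and let a₁', a₂' ∈ ℂ². Then |a₁'⟩⟨a₂| + |a₂⟩⟨a₁'| + |a₂'⟩⟨a₁| + |a₁⟩⟨a₂'| = 0 if and only if conj(α) a₁' + a₂' = iλ' a₁ for some λ' ∈ ℝ. -/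
/-- The outer product `|v⟩⟨w|`, the 2×2 matrix with entries `v k * conj (w l)`. -/
noncomputable def outer (v w : Fin 2 → ℂ) : Matrix (Fin 2) (Fin 2) ℂ :=
  fun k l => v k * (starRingEnd ℂ) (w l)

/-!
Since `a₂ = α a₁`, the matrix is `|b⟩⟨a₁| + |a₁⟩⟨b|` with `b = conj α • a₁' + a₂'`. For `a ≠ 0`,
`|b⟩⟨a| + |a⟩⟨b| = 0` forces `b = z a` with `z = b k / a k` for any `k` where `a k ≠ 0` (read off
column `k`), and then the diagonal entry `(k, k)` gives `2 Re z |a k|² = 0`, so `z` is purely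
imaginary.
-/

open Matrix ComplexConjugate

lemma Complex.eq_I_mul_im_of_conj_eq_neg {z : ℂ} (hz : conj z = -z) : z = I * z.im := by
  have hre : z.re = 0 := by
    have := congrArg Complex.re hz
    simp only [Complex.conj_re, Complex.neg_re] at this
    linarith
  apply Complex.ext <;> simp [hre]

lemma vecMulVec_add_vecMulVec_star_eq_zero_iff {ι : Type*} {a b : ι → ℂ} (ha : a ≠ 0) :
    vecMulVec b (star a) + vecMulVec a (star b) = 0 ↔ ∃ t : ℝ, b = (Complex.I * t) • a := by
  constructor
  · intro h
    have hentry (l k : ι) : b l * conj (a k) + a l * conj (b k) = 0 := by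
      simpa [vecMulVec_apply] using congrFun (congrFun h l) k
    obtain ⟨k, hk⟩ := Function.ne_iff.mp ha
    set z := b k / a k
    have hbk : b k = z * a k := (div_mul_cancel₀ _ hk).symm
    have hnorm : a k * conj (a k) ≠ 0 := mul_ne_zero hk ((map_ne_zero _).mpr hk)
    have hz : conj z = -z := by
      have hdiag : (z + conj z) * (a k * conj (a k)) = 0 := by
        have := hentry k k
        rw [hbk, map_mul] at this
        linear_combination this
      linear_combination (eq_zero_of_ne_zero_of_mul_right_eq_zero hnorm hdiag)
    have hb : b = z • a := funext fun l => by
      have hcol : (b l - z * a l) * conj (a k) = 0 := by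
        have := hentry l k
        rw [hbk, map_mul, hz] at this
        linear_combination this
      simpa [sub_eq_zero] using
        eq_zero_of_ne_zero_of_mul_right_eq_zero ((map_ne_zero _).mpr hk) hcol
    exact ⟨z.im, Complex.eq_I_mul_im_of_conj_eq_neg hz ▸ hb⟩
  · rintro ⟨t, rfl⟩
    ext k l
    simp only [Matrix.add_apply, vecMulVec_apply, Pi.star_apply, Pi.smul_apply, smul_eq_mul, star_mul',
      Complex.star_def, Complex.conj_I, Complex.conj_ofReal, Matrix.zero_apply]
    ring

lemma outer_sum_of_eq_smul (a₁ a₁' a₂' : Fin 2 → ℂ) (α : ℂ) :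
    outer a₁' (α • a₁) + outer (α • a₁) a₁' + outer a₂' a₁ + outer a₁ a₂' =
      vecMulVec (conj α • a₁' + a₂') (star a₁) + vecMulVec a₁ (star (conj α • a₁' + a₂')) := by
  ext k l
  simp only [outer, Matrix.add_apply, vecMulVec_apply, Pi.add_apply, Pi.star_apply, Pi.smul_apply,
    smul_eq_mul, star_add, star_mul', Complex.star_def, map_mul, Complex.conj_conj]
  ring

theorem stmt8 (a₁ a₂ a₁' a₂' : Fin 2 → ℂ) (α : ℂ)
    (ha : a₁ ≠ 0) (h2 : a₂ = α • a₁) :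
    outer a₁' a₂ + outer a₂ a₁' + outer a₂' a₁ + outer a₁ a₂' = 0 ↔
      ∃ l : ℝ, (starRingEnd ℂ α) • a₁' + a₂' = (Complex.I * (l : ℂ)) • a₁ := by
  subst h2
  rw [outer_sum_of_eq_smul]
  exact vecMulVec_add_vecMulVec_star_eq_zero_iff ha
end

section
/- Let a₁, a₂ ∈ ℂ² be linearly independent and let a₁', a₂' ∈ ℂ². Then |a₁'⟩⟨a₂| + |a₂⟩⟨a₁'| + |a₂'⟩⟨a₁| + |a₁⟩⟨a₂'| = 0 if and only if there exist μ' ∈ ℂ and λ₁', λ₂' ∈ ℝ such that a₁' = μ' a₁ + iλ₁' a₂ and a₂' = −conj(μ') a₂ + iλ₂' a₁. -/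
open Matrix ComplexConjugate Module

theorem LinearIndependent.exists_eq_smul_add_smul_of_finrank_eq_two {K V : Type*} [Field K]
    [AddCommGroup V] [Module K V] {x y : V} (h : LinearIndependent K ![x, y])
    (hV : finrank K V = 2) (v : V) : ∃ α β : K, v = α • x + β • y := by
  have hspan := h.span_eq_top_of_card_eq_finrank (by simp [hV])
  rw [range_cons_cons_empty] at hspan
  obtain ⟨α, β, hv⟩ := Submodule.mem_span_pair.1 (hspan ▸ Submodule.mem_top (x := v))
  exact ⟨α, β, hv.symm⟩

theorem Complex.add_conj_eq_zero_iff {z : ℂ} : z + conj z = 0 ↔ ∃ l : ℝ, z = I * l := by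
  rw [add_conj]
  constructor
  · intro hz
    refine ⟨z.im, Complex.ext ?_ ?_⟩ <;> simp_all
  · rintro ⟨l, rfl⟩
    simp

namespace Matrix

variable {n R : Type*} [Fintype n]

theorem sum_smul_vecMulVec_star [CommSemiring R] [StarRing R] (A C : Matrix n n R) :
    ∑ i, ∑ j, C i j • vecMulVec (A i) (star (A j)) = Aᵀ * C * Aᵀᴴ := by
  ext k l
  simp only [Matrix.sum_apply, smul_apply, vecMulVec_apply, mul_apply, Pi.star_apply,
    transpose_apply, conjTranspose_apply, smul_eq_mul, Finset.sum_mul]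
  rw [Finset.sum_comm]
  refine Finset.sum_congr rfl fun i _ => Finset.sum_congr rfl fun j _ => ?_
  ring

theorem sum_smul_vecMulVec_star_eq_zero_iff [DecidableEq n] [CommRing R] [StarRing R]
    {A : Matrix n n R} (hA : IsUnit A) (C : Matrix n n R) :
    ∑ i, ∑ j, C i j • vecMulVec (A i) (star (A j)) = 0 ↔ C = 0 := by
  have hAt : IsUnit Aᵀ := (isUnit_transpose A).2 hA
  rw [sum_smul_vecMulVec_star, ((isUnit_conjTranspose _).2 hAt).mul_left_eq_zero,
    hAt.mul_right_eq_zero]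

end Matrix

theorem outer_sum_eq_sum_smul_vecMulVec (a₁ a₂ : Fin 2 → ℂ) (α β γ δ : ℂ) :
    outer (α • a₁ + β • a₂) a₂ + outer a₂ (α • a₁ + β • a₂) +
        outer (γ • a₁ + δ • a₂) a₁ + outer a₁ (γ • a₁ + δ • a₂) =
      ∑ i, ∑ j, !![γ + conj γ, α + conj δ; conj α + δ, β + conj β] i j •
        vecMulVec (of ![a₁, a₂] i) (star (of ![a₁, a₂] j)) := by
  ext k l
  simp only [Matrix.add_apply, outer, Pi.add_apply, Pi.smul_apply, smul_eq_mul, map_add, map_mul,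
    of_apply, cons_val', cons_val_fin_one, Fin.sum_univ_two, cons_val_zero, cons_val_one,
    Matrix.smul_apply, vecMulVec_apply, Pi.star_apply, RCLike.star_def]
  ring

theorem outer_sum_eq_zero_iff {a₁ a₂ : Fin 2 → ℂ} (h : LinearIndependent ℂ ![a₁, a₂])
    (α β γ δ : ℂ) :
    outer (α • a₁ + β • a₂) a₂ + outer a₂ (α • a₁ + β • a₂) +
        outer (γ • a₁ + δ • a₂) a₁ + outer a₁ (γ • a₁ + δ • a₂) = 0 ↔
      γ + conj γ = 0 ∧ α + conj δ = 0 ∧ β + conj β = 0 := by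
  rw [outer_sum_eq_sum_smul_vecMulVec, sum_smul_vecMulVec_star_eq_zero_iff (A := of ![a₁, a₂])
    (linearIndependent_rows_iff_isUnit.1 h)]
  have hconj : conj α + δ = 0 ↔ α + conj δ = 0 := by
    rw [← map_eq_zero (starRingEnd ℂ), map_add, Complex.conj_conj, add_comm]
  simp only [← Matrix.ext_iff, Fin.forall_fin_two, of_apply, cons_val', cons_val_zero,
    cons_val_one, empty_val', cons_val_fin_one, Matrix.zero_apply, hconj]
  tauto

theorem stmt9 (a₁ a₂ a₁' a₂' : Fin 2 → ℂ)
    (h : LinearIndependent ℂ ![a₁, a₂]) :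
    outer a₁' a₂ + outer a₂ a₁' + outer a₂' a₁ + outer a₁ a₂' = 0 ↔
      ∃ (μ' : ℂ) (l₁ l₂ : ℝ),
        a₁' = μ' • a₁ + (Complex.I * (l₁ : ℂ)) • a₂ ∧
        a₂' = (-(starRingEnd ℂ μ')) • a₂ + (Complex.I * (l₂ : ℂ)) • a₁ := by
  constructor
  · have hdim : finrank ℂ (Fin 2 → ℂ) = 2 := by simp
    obtain ⟨α, β, rfl⟩ := h.exists_eq_smul_add_smul_of_finrank_eq_two hdim a₁'
    obtain ⟨γ, δ, rfl⟩ := h.exists_eq_smul_add_smul_of_finrank_eq_two hdim a₂'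
    intro hzero
    obtain ⟨hγ, hαδ, hβ⟩ := (outer_sum_eq_zero_iff h α β γ δ).1 hzero
    obtain ⟨l₁, rfl⟩ := Complex.add_conj_eq_zero_iff.1 hβ
    obtain ⟨l₂, rfl⟩ := Complex.add_conj_eq_zero_iff.1 hγ
    have hδ : δ = -conj α := by
      rw [← Complex.conj_conj δ, eq_neg_of_add_eq_zero_right hαδ, map_neg]
    exact ⟨α, l₁, l₂, rfl, by rw [hδ, add_comm]⟩
  · rintro ⟨μ, l₁, l₂, rfl, rfl⟩
    rw [add_comm (-conj μ • a₂), outer_sum_eq_zero_iff h]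
    exact ⟨Complex.add_conj_eq_zero_iff.2 ⟨l₂, rfl⟩, by simp,
      Complex.add_conj_eq_zero_iff.2 ⟨l₁, rfl⟩⟩
end
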